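/- arXiv:2306.09193 — 8 statements merged into one kernel-verified Lean document; each statement's English description precedes it below -/
import Mathlib

section
/- Suppose additionally that the kernel k is aperiodic (A3), that g(t) ≥ 0 for all t ∈ ℕ with ∑_{t=0}^∞ g(t) < ∞, that b satisfies the renewal equation b(t) = ∑_{s=1}^{t} k(s) b(t−s) + g(t) for all t ∈ ℕ, and that ℛ₀ := ∑_{t=1}^∞ k(t) < 1. Then b is summable with ∑_{t=0}^∞ b(t) = (∑_{t=0}^∞ g(t)) / (1 − ℛ₀), and b(t) → 0 as t → ∞. (Feller's Renewal Theorem, part (i).) -/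
open Filter Topology

/-!
Summing the renewal equation over `t < N` and bounding the truncated Cauchy product by the product
of truncated sums gives `B_N ≤ ℛ₀ B_N + ∑ g` for the partial sums `B_N` of the nonnegative `b`,
so `B_N ≤ (∑ g) / (1 - ℛ₀)` and `b` is summable; in particular `b t → 0`. Once `b` is summable,
the Cauchy product formula turns the renewal equation into `∑ b = ℛ₀ ∑ b + ∑ g`.
-/

open Finset

theorem sum_range_sum_antidiagonal_le_mul {R : Type*} [CommSemiring R] [PartialOrder R]
    [IsOrderedRing R] {f g : ℕ → R} (hf : ∀ n, 0 ≤ f n) (hg : ∀ n, 0 ≤ g n) (N : ℕ) :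
    ∑ n ∈ range N, ∑ p ∈ antidiagonal n, f p.1 * g p.2 ≤
      (∑ n ∈ range N, f n) * ∑ n ∈ range N, g n := by
  have hflip := sum_range_diag_flip N fun i j => f i * g j
  simp only [← Nat.sum_antidiagonal_eq_sum_range_succ fun i j => f i * g j] at hflip
  rw [hflip, sum_mul_sum]
  refine sum_le_sum fun i _ => sum_le_sum_of_subset_of_nonneg ?_ fun j _ _ => ?_
  · exact range_subset_range.2 (Nat.sub_le N i)
  · exact mul_nonneg (hf i) (hg j)

section Renewal

variable {k g b : ℕ → ℝ}

theorem renewal_nonneg (hk : ∀ t, 0 ≤ k t) (hg : ∀ t, 0 ≤ g t)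
    (hb : ∀ t, b t = ∑ s ∈ Icc 1 t, k s * b (t - s) + g t) (t : ℕ) : 0 ≤ b t := by
  induction t using Nat.strong_induction_on with
  | _ t ih =>
    rw [hb t]
    refine add_nonneg (sum_nonneg fun s hs => mul_nonneg (hk s) (ih (t - s) ?_)) (hg t)
    rw [mem_Icc] at hs
    omega

theorem renewal_eq_sum_antidiagonal (hk0 : k 0 = 0)
    (hb : ∀ t, b t = ∑ s ∈ Icc 1 t, k s * b (t - s) + g t) (t : ℕ) :
    b t = ∑ p ∈ antidiagonal t, k p.1 * b p.2 + g t := by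
  rw [Nat.sum_antidiagonal_eq_sum_range_succ fun i j => k i * b j, hb t, range_eq_Ico,
    sum_eq_sum_Ico_succ_bot t.succ_pos, hk0, zero_mul, zero_add, Nat.succ_eq_add_one,
    Ico_add_one_right_eq_Icc]

theorem sum_range_le_div_of_eq_conv_add
    (hb : ∀ t, b t = ∑ p ∈ antidiagonal t, k p.1 * b p.2 + g t) (hk : ∀ t, 0 ≤ k t) (hg : ∀ t, 0 ≤ g t)
    (hb_nonneg : ∀ t, 0 ≤ b t) (hk_sum : Summable k) (hg_sum : Summable g)
    (hR : ∑' t, k t < 1) (N : ℕ) :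
    ∑ t ∈ range N, b t ≤ (∑' t, g t) / (1 - ∑' t, k t) := by
  set B := ∑ t ∈ range N, b t
  have hB : B ≤ (∑ t ∈ range N, k t) * B + ∑ t ∈ range N, g t := by
    calc B = ∑ t ∈ range N, ∑ p ∈ antidiagonal t, k p.1 * b p.2 + ∑ t ∈ range N, g t := by
          rw [← sum_add_distrib]; exact sum_congr rfl fun t _ => hb t
      _ ≤ _ := by gcongr; exact sum_range_sum_antidiagonal_le_mul hk hb_nonneg N
  have hK : ∑ t ∈ range N, k t ≤ ∑' t, k t := hk_sum.sum_le_tsum _ fun t _ => hk t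
  have hG : ∑ t ∈ range N, g t ≤ ∑' t, g t := hg_sum.sum_le_tsum _ fun t _ => hg t
  have hB_nonneg : 0 ≤ B := sum_nonneg fun t _ => hb_nonneg t
  rw [le_div_iff₀ (by linarith)]
  nlinarith

theorem tsum_eq_div_of_eq_conv_add
    (hb : ∀ t, b t = ∑ p ∈ antidiagonal t, k p.1 * b p.2 + g t) (hk_sum : Summable k) (hb_sum : Summable b)
    (hg_sum : Summable g) (hR : ∑' t, k t ≠ 1) :
    ∑' t, b t = (∑' t, g t) / (1 - ∑' t, k t) := by
  have hk_norm : Summable fun t => ‖k t‖ := summable_norm_iff.mpr hk_sum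
  have hb_norm : Summable fun t => ‖b t‖ := summable_norm_iff.mpr hb_sum
  have hconv_sum : Summable fun t => ∑ p ∈ antidiagonal t, k p.1 * b p.2 :=
    summable_norm_iff.mp (summable_norm_sum_mul_antidiagonal_of_summable_norm hk_norm hb_norm)
  have hfix : ∑' t, b t = (∑' t, k t) * ∑' t, b t + ∑' t, g t := by
    rw [tsum_mul_tsum_eq_tsum_sum_antidiagonal_of_summable_norm hk_norm hb_norm,
      ← hconv_sum.tsum_add hg_sum]
    exact tsum_congr hb
  rw [eq_div_iff (sub_ne_zero.mpr hR.symm)]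
  linarith

end Renewal

theorem feller_renewal_subcritical_general
    (k g b : ℕ → ℝ)
    -- kernel assumptions
    (hk0 : k 0 = 0)
    (hA1 : ∀ t, 0 ≤ k t)
    (hA2 : Summable k)
    -- forcing assumptions
    (hg : ∀ t, 0 ≤ g t) (hgsum : Summable g)
    -- the renewal equation
    (hb : ∀ t : ℕ, b t = (∑ s ∈ Finset.Icc 1 t, k s * b (t - s)) + g t)
    -- subcriticality: ℛ₀ = ∑_{t=1}^∞ k t < 1
    (hR0 : (∑' t : ℕ, k t) < 1) :
    Summable b ∧ (∑' t : ℕ, b t) = (∑' t : ℕ, g t) / (1 - ∑' t : ℕ, k t) ∧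
      Tendsto b atTop (𝓝 0) := by
  have hb_nonneg := renewal_nonneg hA1 hg hb
  have hconv := renewal_eq_sum_antidiagonal hk0 hb
  have hb_sum : Summable b := summable_of_sum_range_le hb_nonneg
    (sum_range_le_div_of_eq_conv_add hconv hA1 hg hb_nonneg hA2 hgsum hR0)
  exact ⟨hb_sum, tsum_eq_div_of_eq_conv_add hconv hA2 hb_sum hgsum hR0.ne,
    hb_sum.tendsto_atTop_zero⟩

/-- Feller's Renewal Theorem, part (i): subcritical case `ℛ₀ < 1`. -/
theorem feller_renewal_subcritical
    (k g b : ℕ → ℝ)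
    -- kernel assumptions
    (hk0 : k 0 = 0)
    (hA1 : ∀ t, 0 ≤ k t) (hA1' : ∃ t, 0 < k t)
    (hA2 : Summable k)
    -- (A3) aperiodicity
    (hA3 : ¬ ∃ p : ℕ, 1 < p ∧ ∀ s : ℕ, ¬ p ∣ s → k s = 0)
    -- forcing assumptions
    (hg : ∀ t, 0 ≤ g t) (hgsum : Summable g)
    -- the renewal equation
    (hb : ∀ t : ℕ, b t = (∑ s ∈ Finset.Icc 1 t, k s * b (t - s)) + g t)
    -- subcriticality: ℛ₀ = ∑_{t=1}^∞ k t < 1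
    (hR0 : (∑' t : ℕ, k t) < 1) :
    Summable b ∧ (∑' t : ℕ, b t) = (∑' t : ℕ, g t) / (1 - ∑' t : ℕ, k t) ∧
      Tendsto b atTop (𝓝 0) :=
  feller_renewal_subcritical_general k g b hk0 hA1 hA2 hg hgsum hb hR0
end

section
/- Suppose additionally that the kernel k is aperiodic (A3), that g(t) ≥ 0 for all t ∈ ℕ with ∑_{t=0}^∞ g(t) < ∞, that b satisfies the renewal equation b(t) = ∑_{s=1}^{t} k(s) b(t−s) + g(t) for all t ∈ ℕ, that ℛ₀ := ∑_{t=1}^∞ k(t) > 1, and that ρ > 1 is a real number satisfying the Euler–Lotka equation ∑_{s=1}^∞ k(s) ρ^{−s} = 1. Then ρ^{−t} b(t) → (∑_{s=0}^∞ g(s) ρ^{−s}) / (∑_{s=1}^∞ s·k(s) ρ^{−s}) as t → ∞. (Feller's Renewal Theorem, part (iii).) -/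
/-!
Multiplying by `ρ⁻ᵗ` turns the equation into a renewal equation whose kernel
`q s = k s * ρ⁻ˢ` is a probability distribution of mean `μ = ∑ s * q s`, so the claim is the
Erdős–Feller–Pollard theorem `a t → (∑ h) / μ`.

The solution `a` is bounded. Along times `nᵢ` realising `limsup a`, a diagonal argument gives
a limit profile `v j = lim a (nᵢ - j)` with `v j = ∑ q s * v (j + s)` and `v ≤ v 0 = limsup a`.
Since `v j` is a `q`-average of the `v (j + s)`, the maximum propagates: `v j = v 0` forces
`v (j + s) = v 0` whenever `q s ≠ 0`, so by aperiodicity `v` is constant for large `j`.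
Summing the equation gives `∑_{j ≤ n} r j * a (n - j) = ∑_{m ≤ n} h m` with tails
`r j = ∑_{s > j} q s`, whose sum is `μ`; letting `n = nᵢ - N` tend to infinity yields
`μ * limsup a = ∑ h`. The same argument for `-a` gives `μ * liminf a = ∑ h`.
-/

open Filter Topology
open Finset

def IsRenewalSolution (q h a : ℕ → ℝ) : Prop :=
  ∀ t, a t = ∑ s ∈ Icc 1 t, q s * a (t - s) + h t

def renewalTail (q : ℕ → ℝ) (j : ℕ) : ℝ := 1 - ∑ s ∈ range (j + 1), q s

lemma sum_Icc_one_eq_sum_range {M : Type*} [AddCommMonoid M] {f : ℕ → M} (hf : f 0 = 0)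
    (n : ℕ) : ∑ s ∈ Icc 1 n, f s = ∑ s ∈ range (n + 1), f s := by
  rw [sum_range_succ', ← Ico_add_one_right_eq_Icc, sum_Ico_eq_sum_range]
  simp [hf, add_comm]

lemma tendsto_sum_range_mul_of_tendsto {ι : Type*} {l : Filter ι} {c : ℕ → ℝ}
    (hc : Summable c) {u : ι → ℕ → ℝ} {w : ℕ → ℝ} {C : ℝ} (hu : ∀ i s, |u i s| ≤ C)
    (hlim : ∀ s, Tendsto (u · s) l (𝓝 (w s))) {N : ι → ℕ} (hN : Tendsto N l atTop) :
    Tendsto (fun i => ∑ s ∈ range (N i), c s * u i s) l (𝓝 (∑' s, c s * w s)) := by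
  have hfin : ∀ i, ∑ s ∈ range (N i), c s * u i s
      = ∑' s, if s < N i then c s * u i s else 0 := fun i => by
    rw [tsum_eq_sum (s := range (N i)) fun s hs => if_neg (mt mem_range.2 hs)]
    exact sum_congr rfl fun s hs => (if_pos (mem_range.1 hs)).symm
  simp only [hfin]
  refine tendsto_tsum_of_dominated_convergence (hc.abs.mul_right C) (fun s => ?_)
    (Eventually.of_forall fun i s => ?_)
  · refine ((hlim s).const_mul (c s)).congr' ?_
    filter_upwards [hN.eventually_gt_atTop s] with i hi
    rw [if_pos hi]
  · split_ifs
    · rw [Real.norm_eq_abs, abs_mul]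
      exact mul_le_mul_of_nonneg_left (hu i s) (abs_nonneg _)
    · simpa using mul_nonneg (abs_nonneg (c s)) ((abs_nonneg _).trans (hu i s))

lemma exists_strictMono_tendsto_of_abs_le {β : Type*} [Countable β] {x : ℕ → β → ℝ}
    {C : ℝ} (hx : ∀ i j, |x i j| ≤ C) :
    ∃ v : β → ℝ, ∃ ψ : ℕ → ℕ, StrictMono ψ ∧
      ∀ j, Tendsto (fun i => x (ψ i) j) atTop (𝓝 (v j)) := by
  obtain ⟨v, -, ψ, hψ, hlim⟩ := (isCompact_univ_pi fun _ => isCompact_closedBall (0 : ℝ) C)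
    |>.tendsto_subseq (x := x) fun i j _ => by simpa using hx i j
  exact ⟨v, ψ, hψ, tendsto_pi_nhds.1 hlim⟩

lemma exists_limsup_profile {a : ℕ → ℝ} {C : ℝ} (hbd : ∀ t, |a t| ≤ C) :
    ∃ n : ℕ → ℕ, ∃ v : ℕ → ℝ, Tendsto n atTop atTop ∧
      (∀ j, Tendsto (fun i => a (n i - j)) atTop (𝓝 (v j))) ∧
      v 0 = limsup a atTop ∧ ∀ j, v j ≤ limsup a atTop := by
  have hbdd : IsBoundedUnder (· ≤ ·) atTop a :=
    isBoundedUnder_of ⟨C, fun t => (abs_le.1 (hbd t)).2⟩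
  have hcobdd : IsCoboundedUnder (· ≤ ·) atTop a :=
    (isBoundedUnder_of ⟨-C, fun t => (abs_le.1 (hbd t)).1⟩).isCoboundedUnder_flip
  obtain ⟨φ, hφa, hφ⟩ := exists_seq_tendsto_limsup hcobdd hbdd
  obtain ⟨v, ψ, hψ, hv⟩ := exists_strictMono_tendsto_of_abs_le (x := fun i j => a (φ i - j))
    fun i j => hbd _
  have hn : Tendsto (φ ∘ ψ) atTop atTop := hφ.comp hψ.tendsto_atTop
  refine ⟨φ ∘ ψ, v, hn, hv, ?_, fun j => ?_⟩
  · exact tendsto_nhds_unique (by simpa using hv 0)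
      (by simpa [Function.comp_def] using hφa.comp hψ.tendsto_atTop)
  · exact (MapClusterPt.of_comp ((tendsto_sub_atTop_nat j).comp hn)
      (hv j).mapClusterPt).le_limsup

lemma eq_of_hasSum_mul_of_le {q v : ℕ → ℝ} {m : ℝ} (hqnn : ∀ s, 0 ≤ q s)
    (hq1 : HasSum q 1) (hv : ∀ s, v s ≤ m) (hqv : HasSum (fun s => q s * v s) m) {s : ℕ}
    (hs : q s ≠ 0) : v s = m := by
  by_contra hne
  have := hasSum_lt (fun t => mul_le_mul_of_nonneg_left (hv t) (hqnn t))
    (mul_lt_mul_of_pos_left ((hv s).lt_of_ne hne) ((hqnn s).lt_of_ne' hs)) hqv (hq1.mul_right m)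
  simp at this

lemma eq_of_mem_closure_support {q v : ℕ → ℝ} (hqnn : ∀ s, 0 ≤ q s) (hq1 : HasSum q 1)
    (hv : ∀ j, v j ≤ v 0) (hprofile : ∀ j, HasSum (fun s => q s * v (j + s)) (v j)) {j : ℕ}
    (hj : j ∈ AddSubmonoid.closure (Function.support q)) : v j = v 0 := by
  suffices ∀ m, v m = v 0 → v (m + j) = v 0 by simpa using this 0 rfl
  induction hj using AddSubmonoid.closure_induction with
  | mem s hs => exact fun m hm =>
      eq_of_hasSum_mul_of_le hqnn hq1 (fun t => hv _) (hm ▸ hprofile m) hs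
  | zero => simp
  | add j₁ j₂ _ _ h₁ h₂ => exact fun m hm => by rw [← add_assoc]; exact h₂ _ (h₁ m hm)

lemma Nat.setGcd_support_eq_one {M : Type*} [Zero M] {k : ℕ → M} (hk0 : k 0 = 0)
    (hk : ∃ t, k t ≠ 0) (haper : ¬ ∃ p : ℕ, 1 < p ∧ ∀ s : ℕ, ¬ p ∣ s → k s = 0) :
    Nat.setGcd (Function.support k) = 1 := by
  obtain ⟨t, ht⟩ := hk
  have hdvd : ∀ s, k s ≠ 0 → Nat.setGcd (Function.support k) ∣ s := fun s hs =>
    Nat.setGcd_dvd_of_mem hs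
  rcases Nat.lt_trichotomy (Nat.setGcd (Function.support k)) 1 with h0 | h1 | hgt
  · have := hdvd t ht
    rw [Nat.lt_one_iff.1 h0, zero_dvd_iff] at this
    exact absurd (this ▸ hk0) ht
  · exact h1
  · exact absurd ⟨_, hgt, fun s hs => by_contra fun h => hs (hdvd s h)⟩ haper

lemma summable_natCast_mul_mul_pow {k : ℕ → ℝ} (hk : Summable k) {x : ℝ} (hx : |x| < 1) :
    Summable fun s : ℕ => (s : ℝ) * k s * x ^ s := by
  obtain ⟨B, hB⟩ := (tendsto_self_mul_const_pow_of_abs_lt_one hx).abs.bddAbove_range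
  refine (hk.abs.mul_right B).of_norm_bounded fun s => ?_
  rw [Real.norm_eq_abs, mul_comm (s : ℝ), mul_assoc, abs_mul]
  exact mul_le_mul_of_nonneg_left (hB ⟨s, rfl⟩) (abs_nonneg _)

section RenewalTail

variable {q : ℕ → ℝ}

lemma hasSum_ite_lt_renewalTail (hq1 : HasSum q 1) (j : ℕ) :
    HasSum (fun s => if j < s then q s else 0) (renewalTail q j) := by
  have hhead : HasSum (fun s => if j < s then 0 else q s) (∑ s ∈ range (j + 1), q s) := by
    have : HasSum (fun s => if j < s then 0 else q s)
        (∑ s ∈ range (j + 1), if j < s then 0 else q s) :=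
      hasSum_sum_of_ne_finset_zero fun s hs => by
        simp [Nat.lt_of_succ_le (not_lt.1 (mt mem_range.2 hs))]
    rwa [sum_congr rfl fun s hs => if_neg (not_lt.2 (Nat.lt_succ_iff.1 (mem_range.1 hs)))]
      at this
  have hsplit :
      (fun s => if j < s then q s else 0) = fun s => q s - if j < s then 0 else q s := by
    funext s
    split_ifs <;> simp
  rw [hsplit, renewalTail]
  exact hq1.sub hhead

lemma hasSum_renewalTail (hqnn : ∀ s, 0 ≤ q s) (hq1 : HasSum q 1) {μ : ℝ}
    (hμ : HasSum (fun s : ℕ => (s : ℝ) * q s) μ) :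
    HasSum (renewalTail q) μ := by
  set F : ℕ × ℕ → ℝ := fun p => if p.2 < p.1 then q p.1 else 0
  have hFnn : 0 ≤ F := fun p => by dsimp only [F]; split_ifs <;> simp [hqnn]
  have hrow : ∀ s, HasSum (fun j => F (s, j)) (s * q s) := by
    intro s
    have : HasSum (fun j => F (s, j)) (∑ j ∈ range s, F (s, j)) :=
      hasSum_sum_of_ne_finset_zero fun j hj => by simp [F, not_lt.1 (mt mem_range.2 hj)]
    simpa [F, sum_ite_of_true fun j hj => mem_range.1 hj] using this
  have hF : Summable F := (summable_prod_of_nonneg hFnn).2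
    ⟨fun s => (hrow s).summable, by simpa only [(hrow _).tsum_eq] using hμ.summable⟩
  have htot := hF.hasSum.prod_fiberwise hrow
  have htot' := hF.prod_symm.hasSum.prod_fiberwise fun j => hasSum_ite_lt_renewalTail hq1 j
  have hswap : ∑' p : ℕ × ℕ, F p.swap = ∑' p, F p := (Equiv.prodComm ℕ ℕ).tsum_eq F
  rwa [hswap, ← hμ.unique htot] at htot'

end RenewalTail

namespace IsRenewalSolution

variable {q h a : ℕ → ℝ}

lemma sum_renewalTail_mul (hq0 : q 0 = 0) (ha : IsRenewalSolution q h a) (n : ℕ) :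
    ∑ j ∈ range (n + 1), renewalTail q j * a (n - j) = ∑ m ∈ range (n + 1), h m := by
  have hr0 : renewalTail q 0 = 1 := by simp [renewalTail, hq0]
  induction n with
  | zero => simpa [hr0] using ha 0
  | succ n ih =>
    have hconv : ∑ j ∈ range (n + 1), q (j + 1) * a (n - j) = a (n + 1) - h (n + 1) := by
      rw [ha (n + 1), sum_Icc_one_eq_sum_range (by simp [hq0]), sum_range_succ' _ (n + 1)]
      simp [hq0]
    have htail : ∀ j, renewalTail q (j + 1) = renewalTail q j - q (j + 1) := fun j => by
      simp only [renewalTail, sum_range_succ _ (j + 1)]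
      ring
    rw [sum_range_succ', sum_range_succ _ (n + 1), ← ih]
    simp only [htail, sub_mul, sum_sub_distrib, Nat.add_sub_add_right, hconv, hr0, Nat.sub_zero]
    ring

lemma neg (ha : IsRenewalSolution q h a) : IsRenewalSolution q (-h) (-a) := fun t => by
  simp [ha t, sum_neg_distrib]
  ring

lemma abs_le_sum_range (hqnn : ∀ s, 0 ≤ q s) (hq1 : ∀ n, ∑ s ∈ Icc 1 n, q s ≤ 1)
    (ha : IsRenewalSolution q h a) (t : ℕ) : |a t| ≤ ∑ m ∈ range (t + 1), |h m| := by
  induction t using Nat.strong_induction_on with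
  | _ t ih =>
    have hpast : ∀ s ∈ Icc 1 t, q s * |a (t - s)| ≤ q s * ∑ m ∈ range t, |h m| := by
      intro s hs
      have hs := mem_Icc.1 hs
      refine mul_le_mul_of_nonneg_left ((ih _ (by omega)).trans ?_) (hqnn s)
      exact sum_le_sum_of_subset_of_nonneg (range_subset_range.2 (by omega)) fun _ _ _ =>
        abs_nonneg _
    calc |a t| ≤ ∑ s ∈ Icc 1 t, q s * |a (t - s)| + |h t| := by
          rw [ha t]
          refine (abs_add_le _ _).trans (add_le_add_left ((abs_sum_le_sum_abs _ _).trans ?_) _)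
          simp [abs_mul, abs_of_nonneg (hqnn _)]
      _ ≤ (∑ s ∈ Icc 1 t, q s) * ∑ m ∈ range t, |h m| + |h t| := by
          rw [sum_mul]
          gcongr ?_ + _
          exact sum_le_sum hpast
      _ ≤ ∑ m ∈ range (t + 1), |h m| := by
          rw [sum_range_succ]
          gcongr
          exact mul_le_of_le_one_left (sum_nonneg fun _ _ => abs_nonneg _) (hq1 t)

lemma hasSum_profile (hq0 : q 0 = 0) (hq : Summable q) (ha : IsRenewalSolution q h a) {C : ℝ}
    (hbd : ∀ t, |a t| ≤ C) (hh : Tendsto h atTop (𝓝 0)) {n : ℕ → ℕ}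
    (hn : Tendsto n atTop atTop) {v : ℕ → ℝ}
    (hv : ∀ j, Tendsto (fun i => a (n i - j)) atTop (𝓝 (v j))) (j : ℕ) :
    HasSum (fun s => q s * v (j + s)) (v j) := by
  have hvC : ∀ j, |v j| ≤ C := fun j =>
    le_of_tendsto (hv j).abs (Eventually.of_forall fun _ => hbd _)
  have hshift : Tendsto (fun i => n i - j) atTop atTop := (tendsto_sub_atTop_nat j).comp hn
  have hconv := tendsto_sum_range_mul_of_tendsto hq (u := fun i s => a (n i - j - s))
    (fun _ _ => hbd _) (fun s => by simpa [Nat.sub_sub] using hv (j + s))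
    ((tendsto_add_atTop_nat 1).comp hshift)
  have hsum : Summable fun s => q s * v (j + s) :=
    (hq.abs.mul_right C).of_norm_bounded fun s => by
      rw [Real.norm_eq_abs, abs_mul]
      exact mul_le_mul_of_nonneg_left (hvC _) (abs_nonneg _)
  convert hsum.hasSum
  have hlim := hconv.add (hh.comp hshift)
  rw [add_zero] at hlim
  refine tendsto_nhds_unique (hv j) (hlim.congr fun i => ?_)
  simp [ha (n i - j),
    sum_Icc_one_eq_sum_range (f := fun s => q s * a (n i - j - s)) (by simp [hq0])]

lemma mul_limsup_eq (hq0 : q 0 = 0) (hqnn : ∀ s, 0 ≤ q s) (hq1 : HasSum q 1)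
    (haper : Nat.setGcd (Function.support q) = 1) {μ : ℝ}
    (hμ : HasSum (fun s : ℕ => (s : ℝ) * q s) μ) (ha : IsRenewalSolution q h a) {C G : ℝ}
    (hbd : ∀ t, |a t| ≤ C) (hh : HasSum h G) : μ * limsup a atTop = G := by
  obtain ⟨n, v, hn, hv, hv0, hvle⟩ := exists_limsup_profile hbd
  have hprofile := ha.hasSum_profile hq0 hq1.summable hbd hh.summable.tendsto_atTop_zero hn hv
  obtain ⟨N₀, hN₀⟩ := Nat.exists_mem_closure_of_ge (Function.support q)
  have hvN : ∀ j ≥ N₀, v j = limsup a atTop := fun j hj => hv0 ▸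
    eq_of_mem_closure_support hqnn hq1 (hv0 ▸ hvle) hprofile (hN₀ j hj (haper ▸ one_dvd j))
  have hshift : Tendsto (fun i => n i - N₀) atTop atTop := (tendsto_sub_atTop_nat N₀).comp hn
  have hlim := tendsto_sum_range_mul_of_tendsto (hasSum_renewalTail hqnn hq1 hμ).summable
    (u := fun i j => a (n i - N₀ - j)) (fun _ _ => hbd _)
    (fun j => by simpa [Nat.sub_sub, hvN (N₀ + j) le_self_add] using hv (N₀ + j))
    ((tendsto_add_atTop_nat 1).comp hshift)
  have hG : Tendsto (fun i => ∑ m ∈ range (n i - N₀ + 1), h m) atTop (𝓝 G) :=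
    (hh.tendsto_sum_nat.comp (tendsto_add_atTop_nat 1)).comp hshift
  have := tendsto_nhds_unique (hlim.congr fun i => ha.sum_renewalTail_mul hq0 _) hG
  rwa [tsum_mul_right, (hasSum_renewalTail hqnn hq1 hμ).tsum_eq] at this

theorem tendsto_div (hq0 : q 0 = 0) (hqnn : ∀ s, 0 ≤ q s) (hq1 : HasSum q 1)
    (haper : Nat.setGcd (Function.support q) = 1) {μ : ℝ}
    (hμ : HasSum (fun s : ℕ => (s : ℝ) * q s) μ) (ha : IsRenewalSolution q h a) {G : ℝ}
    (hh : HasSum h G) : Tendsto a atTop (𝓝 (G / μ)) := by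
  have hμ1 : 1 ≤ μ := hasSum_le (fun s => by
    rcases s.eq_zero_or_pos with rfl | hs
    · simp [hq0]
    · exact le_mul_of_one_le_left (hqnn s) (by exact_mod_cast hs)) hq1 hμ
  have hbd : ∀ t, |a t| ≤ ∑' m, |h m| := fun t =>
    (ha.abs_le_sum_range hqnn (fun n => by
      rw [sum_Icc_one_eq_sum_range hq0]; exact sum_le_hasSum _ (fun s _ => hqnn s) hq1) t).trans
      (hh.summable.abs.sum_le_tsum _ fun _ _ => abs_nonneg _)
  obtain ⟨hbdd, hbdd'⟩ := isBoundedUnder_le_abs.1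
    (isBoundedUnder_of ⟨_, hbd⟩ : IsBoundedUnder (· ≤ ·) atTop fun t => |a t|)
  have hsup := ha.mul_limsup_eq hq0 hqnn hq1 haper hμ hbd hh
  have hinf : μ * liminf a atTop = G := by
    have := ha.neg.mul_limsup_eq hq0 hqnn hq1 haper hμ (fun t => by simpa using hbd t) hh.neg
    rw [show -a = fun t => 0 - a t by simp [Pi.neg_def],
      limsup_const_sub _ _ _ hbdd.isCoboundedUnder_flip hbdd'] at this
    linarith
  have hμ0 : μ ≠ 0 := (zero_lt_one.trans_le hμ1).ne'
  exact tendsto_of_liminf_eq_limsup (eq_div_of_mul_eq hμ0 (by linarith))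
    (eq_div_of_mul_eq hμ0 (by linarith)) hbdd hbdd'

lemma pow_mul {k g b : ℕ → ℝ} (hb : IsRenewalSolution k g b) (x : ℝ) :
    IsRenewalSolution (fun s => k s * x ^ s) (fun t => g t * x ^ t) (fun t => x ^ t * b t) :=
  fun t => by
    dsimp only
    rw [hb t, mul_add, mul_sum, mul_comm (x ^ t)]
    congr 1
    refine sum_congr rfl fun s hs => ?_
    rw [← Nat.add_sub_of_le (mem_Icc.1 hs).2, pow_add, Nat.add_sub_cancel_left]
    ring

end IsRenewalSolution

theorem feller_renewal_supercritical_general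
    (k g b : ℕ → ℝ) (ρ : ℝ)
    -- kernel assumptions
    (hk0 : k 0 = 0)
    (hA1 : ∀ t, 0 ≤ k t) (hA1' : ∃ t, 0 < k t)
    (hA2 : Summable k)
    -- (A3) aperiodicity
    (hA3 : ¬ ∃ p : ℕ, 1 < p ∧ ∀ s : ℕ, ¬ p ∣ s → k s = 0)
    -- forcing assumptions
    (hgsum : Summable g)
    -- the renewal equation
    (hb : ∀ t : ℕ, b t = (∑ s ∈ Finset.Icc 1 t, k s * b (t - s)) + g t)
    -- ρ > 1 solves the Euler–Lotka equation ∑_{s=1}^∞ k(s) ρ⁻ˢ = 1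
    (hρ : 1 < ρ) (hEL : HasSum (fun s : ℕ => k s * ρ⁻¹ ^ s) 1) :
    Tendsto (fun t : ℕ => ρ⁻¹ ^ t * b t) atTop
      (𝓝 ((∑' s : ℕ, g s * ρ⁻¹ ^ s) / ∑' s : ℕ, (s : ℝ) * k s * ρ⁻¹ ^ s)) := by
  have hx0 : 0 < ρ⁻¹ := inv_pos.2 (zero_lt_one.trans hρ)
  have hx1 : ρ⁻¹ < 1 := inv_lt_one_of_one_lt₀ hρ
  have hsupp : Function.support (fun s => k s * ρ⁻¹ ^ s) = Function.support k := by
    ext s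
    simp [(zero_lt_one.trans hρ).ne']
  have hh : Summable fun t => g t * ρ⁻¹ ^ t := hgsum.abs.of_norm_bounded fun t => by
    rw [Real.norm_eq_abs, abs_mul, abs_of_pos (pow_pos hx0 t)]
    exact mul_le_of_le_one_right (abs_nonneg _) (pow_le_one₀ hx0.le hx1.le)
  refine IsRenewalSolution.tendsto_div (by simp [hk0])
    (fun s => mul_nonneg (hA1 s) (pow_nonneg hx0.le s)) hEL ?_ ?_
    (IsRenewalSolution.pow_mul hb ρ⁻¹) hh.hasSum
  · rw [hsupp]
    exact Nat.setGcd_support_eq_one hk0 (hA1'.imp fun t ht => ht.ne') hA3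
  · simpa only [mul_assoc] using
      (summable_natCast_mul_mul_pow hA2 (by rwa [abs_of_pos hx0])).hasSum

/-- Feller's Renewal Theorem, part (iii): supercritical case `ℛ₀ > 1`. -/
theorem feller_renewal_supercritical
    (k g b : ℕ → ℝ) (ρ : ℝ)
    -- kernel assumptions
    (hk0 : k 0 = 0)
    (hA1 : ∀ t, 0 ≤ k t) (hA1' : ∃ t, 0 < k t)
    (hA2 : Summable k)
    -- (A3) aperiodicity
    (hA3 : ¬ ∃ p : ℕ, 1 < p ∧ ∀ s : ℕ, ¬ p ∣ s → k s = 0)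
    -- forcing assumptions
    (hg : ∀ t, 0 ≤ g t) (hgsum : Summable g)
    -- the renewal equation
    (hb : ∀ t : ℕ, b t = (∑ s ∈ Finset.Icc 1 t, k s * b (t - s)) + g t)
    -- supercriticality: ℛ₀ = ∑_{t=1}^∞ k t > 1
    (hR0 : 1 < ∑' t : ℕ, k t)
    -- ρ > 1 solves the Euler–Lotka equation ∑_{s=1}^∞ k(s) ρ⁻ˢ = 1
    (hρ : 1 < ρ) (hEL : HasSum (fun s : ℕ => k s * ρ⁻¹ ^ s) 1) :
    Tendsto (fun t : ℕ => ρ⁻¹ ^ t * b t) atTop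
      (𝓝 ((∑' s : ℕ, g s * ρ⁻¹ ^ s) / ∑' s : ℕ, (s : ℝ) * k s * ρ⁻¹ ^ s)) :=
  feller_renewal_supercritical_general k g b ρ hk0 hA1 hA1' hA2 hA3 hgsum hb hρ hEL
end

section
/- Let k be a kernel satisfying (A1) and (A2), suppose k(s) > 0 for at least one s ≥ 2, and suppose ℛ₀ := ∑_{t=1}^∞ k(t) > 1. Then there exists a unique real number ρ > 0 such that the series k̄(ρ) = ∑_{s=1}^∞ k(s) ρ^{−s} converges and equals 1, and this ρ satisfies 1 < ρ < ℛ₀. -/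
/-!
Substituting `x = ρ⁻¹` turns the Euler–Lotka equation into `F x = 1` for the generating function
`F x = ∑ k(s) xˢ`. On `[0, 1]` this is a continuous, strictly increasing function with `F 0 = 0`
and `F 1 = ℛ₀ > 1`, so it takes the value `1` at exactly one point `x ∈ (0, 1)`; for `x ≥ 1` the
series is at least `ℛ₀`. Since `k` charges some `s ≥ 2` and `xˢ < x` there, `1 = F x < ℛ₀ x`,
which is `ρ < ℛ₀`.
-/

open Set

namespace EulerLotka

/-- The z-transform of the kernel is `k̄(z) = genFun k z⁻¹`. -/
noncomputable def genFun (k : ℕ → ℝ) (x : ℝ) : ℝ := ∑' s, k s * x ^ s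

variable {k : ℕ → ℝ}

theorem norm_mul_pow_le (hk : ∀ s, 0 ≤ k s) {x : ℝ} (hx : x ∈ Icc (0 : ℝ) 1) (s : ℕ) :
    ‖k s * x ^ s‖ ≤ k s := by
  rw [norm_mul, norm_pow, Real.norm_of_nonneg (hk s), Real.norm_of_nonneg hx.1]
  exact mul_le_of_le_one_right (hk s) (pow_le_one₀ hx.1 hx.2)

theorem summable_mul_pow (hk : ∀ s, 0 ≤ k s) (hsum : Summable k) {x : ℝ}
    (hx : x ∈ Icc (0 : ℝ) 1) : Summable fun s => k s * x ^ s :=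
  hsum.of_norm_bounded (norm_mul_pow_le hk hx)

theorem continuousOn_genFun (hk : ∀ s, 0 ≤ k s) (hsum : Summable k) :
    ContinuousOn (genFun k) (Icc 0 1) :=
  continuousOn_tsum (fun s => (continuous_const.mul (continuous_pow s)).continuousOn) hsum
    fun _ _ hx => norm_mul_pow_le hk hx _

theorem strictMonoOn_genFun (hk : ∀ s, 0 ≤ k s) (hsum : Summable k) {i : ℕ} (hi : i ≠ 0)
    (hki : 0 < k i) : StrictMonoOn (genFun k) (Icc 0 1) := by
  intro a ha b hb hab
  exact (summable_mul_pow hk hsum ha).tsum_lt_tsum (i := i)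
    (fun s => mul_le_mul_of_nonneg_left (pow_le_pow_left₀ ha.1 hab.le s) (hk s))
    (mul_lt_mul_of_pos_left (pow_lt_pow_left₀ hab ha.1 hi) hki) (summable_mul_pow hk hsum hb)

theorem genFun_zero (hk0 : k 0 = 0) : genFun k 0 = 0 := by
  rw [genFun, tsum_eq_single 0 fun s hs => by simp [hs]]
  simp [hk0]

theorem genFun_one : genFun k 1 = ∑' s, k s := by
  simp [genFun]

theorem exists_mem_Ioo_genFun_eq_one (hk0 : k 0 = 0) (hk : ∀ s, 0 ≤ k s) (hsum : Summable k)
    (hR0 : 1 < ∑' s, k s) : ∃ x ∈ Ioo (0 : ℝ) 1, genFun k x = 1 := by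
  have h1 : (1 : ℝ) ∈ Ioo (genFun k 0) (genFun k 1) := by
    rw [genFun_zero hk0, genFun_one]
    exact ⟨one_pos, hR0⟩
  exact intermediate_value_Ioo zero_le_one (continuousOn_genFun hk hsum) h1

theorem lt_one_of_hasSum_mul_pow (hk : ∀ s, 0 ≤ k s) (hsum : Summable k) {y a : ℝ}
    (hy : HasSum (fun s => k s * y ^ s) a) (ha : a < ∑' s, k s) : y < 1 := by
  by_contra! h
  have : ∑' s, k s ≤ a := hy.tsum_eq ▸
    hsum.tsum_le_tsum (fun s => le_mul_of_one_le_right (hk s) (one_le_pow₀ h)) hy.summable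
  linarith

theorem genFun_lt_tsum_mul (hk0 : k 0 = 0) (hk : ∀ s, 0 ≤ k s) (hsum : Summable k) {x : ℝ}
    (hx : x ∈ Ioo (0 : ℝ) 1) {s : ℕ} (hs : 2 ≤ s) (hks : 0 < k s) :
    genFun k x < (∑' s, k s) * x := by
  have hpow_le : ∀ n, k n * x ^ n ≤ k n * x
    | 0 => by simp [hk0]
    | n + 1 => mul_le_mul_of_nonneg_left
        (pow_le_of_le_one hx.1.le hx.2.le n.succ_ne_zero) (hk _)
  have hpow_lt : x ^ s < x :=
    (pow_le_pow_of_le_one hx.1.le hx.2.le hs).trans_lt (by nlinarith [hx.1, hx.2])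
  rw [← tsum_mul_right]
  exact (summable_mul_pow hk hsum (Ioo_subset_Icc_self hx)).tsum_lt_tsum hpow_le
    (mul_lt_mul_of_pos_left hpow_lt hks) (hsum.mul_right x)

end EulerLotka

open EulerLotka

theorem euler_lotka_supercritical_general
    (k : ℕ → ℝ)
    (hk0 : k 0 = 0)
    (hA1 : ∀ t, 0 ≤ k t)
    (hA2 : Summable k)
    (hk2 : ∃ s, 2 ≤ s ∧ 0 < k s)
    (hR0 : 1 < ∑' t : ℕ, k t) :
    ∃ ρ : ℝ, (0 < ρ ∧ HasSum (fun s : ℕ => k s * ρ⁻¹ ^ s) 1 ∧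
        1 < ρ ∧ ρ < ∑' t : ℕ, k t) ∧
      ∀ ρ' : ℝ, 0 < ρ' → HasSum (fun s : ℕ => k s * ρ'⁻¹ ^ s) 1 → ρ' = ρ := by
  obtain ⟨s, hs, hks⟩ := hk2
  obtain ⟨x, hx, hFx⟩ := exists_mem_Ioo_genFun_eq_one hk0 hA1 hA2 hR0
  have hx' : x ∈ Icc (0 : ℝ) 1 := Ioo_subset_Icc_self hx
  refine ⟨x⁻¹, ⟨inv_pos.2 hx.1, ?_, (one_lt_inv₀ hx.1).2 hx.2, ?_⟩, ?_⟩
  · rw [inv_inv, ← hFx]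
    exact (summable_mul_pow hA1 hA2 hx').hasSum
  · have := genFun_lt_tsum_mul hk0 hA1 hA2 hx hs hks
    rw [hFx] at this
    exact (inv_lt_iff_one_lt_mul₀ hx.1).2 this
  · intro ρ' hρ' h
    have hy : ρ'⁻¹ ∈ Icc (0 : ℝ) 1 :=
      ⟨inv_nonneg.2 hρ'.le, (lt_one_of_hasSum_mul_pow hA1 hA2 h hR0).le⟩
    have := (strictMonoOn_genFun hA1 hA2 (by omega) hks).injOn hy hx' (h.tsum_eq.trans hFx.symm)
    rw [← this, inv_inv]

/-- If `ℛ₀ > 1` (and the kernel is not concentrated at `s = 1`), the Euler–Lotka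
equation `∑_{s=1}^∞ k(s) ρ⁻ˢ = 1` has a unique positive real solution `ρ`, and it
satisfies `1 < ρ < ℛ₀`. -/
theorem euler_lotka_supercritical
    (k : ℕ → ℝ)
    (hk0 : k 0 = 0)
    (hA1 : ∀ t, 0 ≤ k t) (hA1' : ∃ t, 0 < k t)
    (hA2 : Summable k)
    (hk2 : ∃ s, 2 ≤ s ∧ 0 < k s)
    (hR0 : 1 < ∑' t : ℕ, k t) :
    ∃ ρ : ℝ, (0 < ρ ∧ HasSum (fun s : ℕ => k s * ρ⁻¹ ^ s) 1 ∧
        1 < ρ ∧ ρ < ∑' t : ℕ, k t) ∧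
      ∀ ρ' : ℝ, 0 < ρ' → HasSum (fun s : ℕ => k s * ρ'⁻¹ ^ s) 1 → ρ' = ρ :=
  euler_lotka_supercritical_general k hk0 hA1 hA2 hk2 hR0
end

section
/- Let k be a kernel satisfying (A1) and (A2), suppose k(s) > 0 for at least one s ≥ 2, and suppose ℛ₀ := ∑_{t=1}^∞ k(t) < 1. If ρ > 0 is a real number such that the series k̄(ρ) = ∑_{s=1}^∞ k(s) ρ^{−s} converges and equals 1, then ℛ₀ < ρ < 1. -/
/-! Compare `∑ k(s) ρ⁻ˢ` termwise with `∑ k(s)`: if `ρ ≥ 1` then `ρ⁻ˢ ≤ 1`, forcing `1 ≤ ℛ₀`;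
if `ρ < 1` then `ρ⁻ˢ ≥ ρ⁻¹`, strictly at an `s ≥ 2` with `k(s) > 0`, so `1 > ℛ₀ / ρ`. -/

section PowerSeriesComparison

variable {k : ℕ → ℝ}

theorem tsum_mul_pow_le_tsum (hk : ∀ s, 0 ≤ k s) (hsum : Summable k) {x : ℝ}
    (hx₀ : 0 ≤ x) (hx₁ : x ≤ 1) : ∑' s, k s * x ^ s ≤ ∑' s, k s := by
  have hle : ∀ s, k s * x ^ s ≤ k s := fun s =>
    mul_le_of_le_one_right (hk s) (pow_le_one₀ hx₀ hx₁)
  exact (hsum.of_nonneg_of_le (fun s => mul_nonneg (hk s) (pow_nonneg hx₀ s)) hle).tsum_le_tsum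
    hle hsum

theorem mul_tsum_lt_tsum_mul_pow (hk₀ : k 0 = 0) (hk : ∀ s, 0 ≤ k s) (hsum : Summable k)
    (hk₂ : ∃ s, 2 ≤ s ∧ 0 < k s) {x : ℝ} (hx : 1 < x)
    (hsumx : Summable fun s => k s * x ^ s) : x * ∑' s, k s < ∑' s, k s * x ^ s := by
  obtain ⟨s₀, hs₀, hks₀⟩ := hk₂
  have hle : ∀ s, k s * x ≤ k s * x ^ s := by
    rintro (_ | s)
    · simp [hk₀]
    · exact mul_le_mul_of_nonneg_left (le_self_pow₀ hx.le s.succ_ne_zero) (hk _)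
  have hlt : k s₀ * x < k s₀ * x ^ s₀ :=
    mul_lt_mul_of_pos_left (by simpa using pow_lt_pow_right₀ hx (by omega : 1 < s₀)) hks₀
  rw [← tsum_mul_left]
  simpa only [mul_comm x] using (hsum.mul_right x).tsum_lt_tsum hle hlt hsumx

end PowerSeriesComparison

theorem euler_lotka_subcritical_general
    (k : ℕ → ℝ) (ρ : ℝ)
    (hk0 : k 0 = 0)
    (hA1 : ∀ t, 0 ≤ k t)
    (hA2 : Summable k)
    (hk2 : ∃ s, 2 ≤ s ∧ 0 < k s)
    (hR0 : (∑' t : ℕ, k t) < 1)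
    (hρ : 0 < ρ) (hEL : HasSum (fun s : ℕ => k s * ρ⁻¹ ^ s) 1) :
    (∑' t : ℕ, k t) < ρ ∧ ρ < 1 := by
  have hρ1 : ρ < 1 := by
    by_contra! h
    have := tsum_mul_pow_le_tsum hA1 hA2 (inv_nonneg.mpr hρ.le) (inv_le_one_of_one_le₀ h)
    linarith [hEL.tsum_eq]
  refine ⟨?_, hρ1⟩
  have := mul_tsum_lt_tsum_mul_pow hk0 hA1 hA2 hk2 ((one_lt_inv₀ hρ).mpr hρ1) hEL.summable
  rwa [hEL.tsum_eq, inv_mul_lt_iff₀ hρ, mul_one] at this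

/-- If `ℛ₀ < 1` (and the kernel is not concentrated at `s = 1`), any positive real
solution `ρ` of the Euler–Lotka equation `∑_{s=1}^∞ k(s) ρ⁻ˢ = 1` satisfies
`ℛ₀ < ρ < 1`. -/
theorem euler_lotka_subcritical
    (k : ℕ → ℝ) (ρ : ℝ)
    (hk0 : k 0 = 0)
    (hA1 : ∀ t, 0 ≤ k t) (hA1' : ∃ t, 0 < k t)
    (hA2 : Summable k)
    (hk2 : ∃ s, 2 ≤ s ∧ 0 < k s)
    (hR0 : (∑' t : ℕ, k t) < 1)
    (hρ : 0 < ρ) (hEL : HasSum (fun s : ℕ => k s * ρ⁻¹ ^ s) 1) :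
    (∑' t : ℕ, k t) < ρ ∧ ρ < 1 :=
  euler_lotka_subcritical_general k ρ hk0 hA1 hA2 hk2 hR0 hρ hEL
end

section
/- Let F and T be n × n real matrices, V an n × m real matrix and U an m × n real matrix with F = V U, and let X : ℕ → ℝ^n satisfy X(t) = (F + T) X(t−1) for all t ≥ 1. Define B(t) = U X(t). Then B satisfies the renewal equation B(t) = U T^t X(0) + ∑_{s=1}^{t} (U T^{s−1} V) B(t−s) for all t ∈ ℕ; that is, B satisfies the renewal equation with kernel K(s) = U T^{s−1} V and forcing G(t) = U T^t X(0). -/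
/-- The births `B(t) = U X(t)` of a structured-population model `X(t) = (F+T)X(t-1)`
with `F = VU` satisfy the renewal equation with kernel `K(s) = U T^(s-1) V` and
forcing `G(t) = U T^t X(0)`. -/
theorem births_satisfy_renewal_equation
    (n m : ℕ) (F T : Matrix (Fin n) (Fin n) ℝ)
    (V : Matrix (Fin n) (Fin m) ℝ) (U : Matrix (Fin m) (Fin n) ℝ)
    (hF : F = V * U)
    (X : ℕ → Fin n → ℝ)
    (hX : ∀ t : ℕ, 1 ≤ t → X t = (F + T).mulVec (X (t - 1)))
    (B : ℕ → Fin m → ℝ)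
    (hB : ∀ t : ℕ, B t = U.mulVec (X t)) :
    ∀ t : ℕ, B t = (U * T ^ t).mulVec (X 0) +
      ∑ s ∈ Finset.Icc 1 t, (U * T ^ (s - 1) * V).mulVec (B (t - s)) := by
  have key : ∀ t : ℕ, X t = (T ^ t).mulVec (X 0) +
      ∑ s ∈ Finset.Icc 1 t, (T ^ (s - 1) * V).mulVec (B (t - s)) := by
    intro t
    induction t with
    | zero => simp
    | succ t ih =>
      have hx := hX (t + 1) (by omega)
      simp only [Nat.add_sub_cancel] at hx
      rw [hx, hF, Matrix.add_mulVec, ← Matrix.mulVec_mulVec, ← hB t, ih,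
        Matrix.mulVec_add]
      have hTpow : T.mulVec ((T ^ t).mulVec (X 0)) = (T ^ (t + 1)).mulVec (X 0) := by
        rw [Matrix.mulVec_mulVec, pow_succ']
      rw [hTpow]
      have hsum : T.mulVec (∑ s ∈ Finset.Icc 1 t, (T ^ (s - 1) * V).mulVec (B (t - s))) =
          ∑ s ∈ Finset.Icc 1 t, (T ^ s * V).mulVec (B (t - s)) := by
        rw [show T.mulVec = (Matrix.mulVecLin T : (Fin n → ℝ) →ₗ[ℝ] (Fin n → ℝ)) from rfl,
          map_sum]
        refine Finset.sum_congr rfl fun s hs => ?_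
        simp only [Matrix.mulVecLin_apply, Matrix.mulVec_mulVec]
        rw [← Matrix.mul_assoc, ← pow_succ']
        simp only [Finset.mem_Icc] at hs
        have h1 : s - 1 + 1 = s := by omega
        rw [h1]
      rw [hsum]
      have hreindex : ∑ s ∈ Finset.Icc 1 t, (T ^ s * V).mulVec (B (t - s)) =
          ∑ s ∈ Finset.Icc 2 (t + 1), (T ^ (s - 1) * V).mulVec (B (t + 1 - s)) := by
        refine Finset.sum_nbij' (fun s => s + 1) (fun s => s - 1) ?_ ?_ ?_ ?_ ?_
        · intro a ha
          simp only [Finset.mem_Icc] at ha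
          show a + 1 ∈ Finset.Icc 2 (t + 1)
          simp only [Finset.mem_Icc]; omega
        · intro a ha
          simp only [Finset.mem_Icc] at ha
          show a - 1 ∈ Finset.Icc 1 t
          simp only [Finset.mem_Icc]; omega
        · intro a ha
          simp only [Finset.mem_Icc] at ha
          show a + 1 - 1 = a
          omega
        · intro a ha
          simp only [Finset.mem_Icc] at ha
          show a - 1 + 1 = a
          omega
        · intro a ha
          simp only [Finset.mem_Icc] at ha
          show (T ^ a * V).mulVec (B (t - a)) =
            (T ^ (a + 1 - 1) * V).mulVec (B (t + 1 - (a + 1)))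
          rw [Nat.add_sub_cancel, Nat.succ_sub_succ]
      have hsplit : ∑ s ∈ Finset.Icc 1 (t + 1), (T ^ (s - 1) * V).mulVec (B (t + 1 - s)) =
          (T ^ 0 * V).mulVec (B t) +
          ∑ s ∈ Finset.Icc 2 (t + 1), (T ^ (s - 1) * V).mulVec (B (t + 1 - s)) := by
        rw [show Finset.Icc 1 (t + 1) = insert 1 (Finset.Icc 2 (t + 1)) by
          ext a; simp only [Finset.mem_insert, Finset.mem_Icc]; omega]
        rw [Finset.sum_insert (by simp)]
        simp
      rw [hsplit, hreindex, pow_zero, Matrix.one_mul]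
      abel
  intro t
  rw [hB t, key t, Matrix.mulVec_add, ← Matrix.mulVec_mulVec]
  congr 1
  rw [show U.mulVec = (Matrix.mulVecLin U : (Fin n → ℝ) →ₗ[ℝ] (Fin m → ℝ)) from rfl, map_sum]
  refine Finset.sum_congr rfl fun s hs => ?_
  rw [Matrix.mulVecLin_apply, Matrix.mulVec_mulVec, Matrix.mul_assoc]
end

section
/- Let T be an n × n real matrix, V an n × m real matrix, U an m × n real matrix, F = V U, and let ρ be a real number such that ρI − T is invertible. If the row m-vector Ψ satisfies Ψ U (ρI − T)^{−1} V = Ψ, then the row n-vector Ψ_r := Ψ U (ρI − T)^{−1} is a left eigenvector of F + T corresponding to eigenvalue ρ: Ψ_r (F + T) = ρ Ψ_r. (In particular, taking ρ = 1 this gives the reproductive-value correspondence in the case ℛ₀ = 1 = ρ.) -/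
private lemma vecMul_smulMat {n m : ℕ} (c : ℝ) (M : Matrix (Fin n) (Fin m) ℝ)
    (x : Fin n → ℝ) : Matrix.vecMul x (c • M) = c • Matrix.vecMul x M := by
  ext i
  simp [Matrix.vecMul, dotProduct, Finset.mul_sum, mul_comm, mul_left_comm]

/-- If the row vector `Ψ` satisfies `Ψ U(ρI - T)⁻¹ V = Ψ`, then
`Ψ_r = Ψ U (ρI - T)⁻¹` is a left eigenvector of `F + T = VU + T` with eigenvalue `ρ`. -/
theorem reproductive_values_real_time
    (n m : ℕ) (T F : Matrix (Fin n) (Fin n) ℝ)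
    (V : Matrix (Fin n) (Fin m) ℝ) (U : Matrix (Fin m) (Fin n) ℝ)
    (hF : F = V * U) (ρ : ℝ)
    (hρ : IsUnit (ρ • (1 : Matrix (Fin n) (Fin n) ℝ) - T))
    (Ψ : Fin m → ℝ)
    (hΨ : (U * (ρ • (1 : Matrix (Fin n) (Fin n) ℝ) - T)⁻¹ * V).vecMul Ψ = Ψ) :
    (F + T).vecMul ((U * (ρ • (1 : Matrix (Fin n) (Fin n) ℝ) - T)⁻¹).vecMul Ψ) =
      ρ • (U * (ρ • (1 : Matrix (Fin n) (Fin n) ℝ) - T)⁻¹).vecMul Ψ := by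
  set A : Matrix (Fin n) (Fin n) ℝ := ρ • (1 : Matrix (Fin n) (Fin n) ℝ) - T with hA
  have hdet := (Matrix.isUnit_iff_isUnit_det A).mp hρ
  have hinv : A⁻¹ * A = 1 := Matrix.nonsing_inv_mul A hdet
  -- Ψ_r * F = Ψ * U
  have h1 : F.vecMul ((U * A⁻¹).vecMul Ψ) = U.vecMul Ψ := by
    rw [hF, Matrix.vecMul_vecMul, ← Matrix.mul_assoc, ← Matrix.vecMul_vecMul, hΨ]
  -- Ψ_r * A = Ψ * U
  have h2 : A.vecMul ((U * A⁻¹).vecMul Ψ) = U.vecMul Ψ := by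
    rw [Matrix.vecMul_vecMul, Matrix.mul_assoc, hinv, Matrix.mul_one]
  -- hence Ψ_r * T = ρ • Ψ_r - Ψ * U
  have h3 : T.vecMul ((U * A⁻¹).vecMul Ψ)
      = ρ • (U * A⁻¹).vecMul Ψ - U.vecMul Ψ := by
    have h2' := h2
    rw [hA, Matrix.vecMul_sub, vecMul_smulMat, Matrix.vecMul_one] at h2'
    have := sub_eq_iff_eq_add.mp h2'
    rw [this]
    abel
  rw [Matrix.vecMul_add, h1, h3]
  abel
end

section
/- Let F and T be entrywise nonnegative n × n real matrices with spectral radius of T strictly less than 1 (so that I − T is invertible), and set ℛ₀ = spectral radius of F(I − T)^{−1} and ρ = spectral radius of F + T. Then sign(ℛ₀ − 1) = sign(ρ − 1); that is, ρ > 1 if and only if ℛ₀ > 1, ρ = 1 if and only if ℛ₀ = 1, and ρ < 1 if and only if ℛ₀ < 1. -/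
/-!
For an entrywise nonnegative matrix `M`, a nonzero `w ≥ 0` with `μ • w ≤ M *ᵥ w` forces
`μ ≤ ρ(M)` (Gelfand's formula, since then `μ ^ n ≤ ‖M ^ n‖`), and `|v|` for an eigenvector `v`
of an eigenvalue of maximal modulus is such a vector with `μ = ρ(M)`. Applied to the negative
part of `x`, the first fact shows that `T *ᵥ x ≤ x` implies `x ≥ 0` when `ρ(T) < 1`; hence
`Q = (1 - T)⁻¹` exists and is nonnegative.

If `μ • w ≤ (F + T) *ᵥ w` with `μ ≥ 1`, then `μ • w ≤ Q F w`, so `F w` witnesses `μ ≤ ℛ₀`: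
thus `ρ(F + T) ≥ 1` implies `ρ(F + T) ≤ ℛ₀`. Conversely, if `w ≤ F Q w` then `u = Q w ≥ w`
satisfies `u ≤ (F + T) *ᵥ u`, so `ℛ₀ ≥ 1` implies `ρ(F + T) ≥ 1`. When `ℛ₀ > 1`, continuity of
`s ↦ s F (1 - s T)⁻¹` keeps `w ≤ s F (1 - s T)⁻¹ w` for some `s < 1`, and the same argument for
`sF, sT` gives `ρ(F + T) ≥ s⁻¹ > 1`.
-/

open scoped NNReal ENNReal
open Filter Topology

theorem spectrum.coe_le_spectralRadius_of_pow_le_nnnorm_pow {A : Type*} [NormedRing A]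
    [NormedAlgebra ℂ A] [CompleteSpace A] {a : A} {c : ℝ≥0}
    (h : ∀ n : ℕ, c ^ n ≤ ‖a ^ n‖₊) : (c : ℝ≥0∞) ≤ spectralRadius ℂ a := by
  refine ge_of_tendsto (pow_nnnorm_pow_one_div_tendsto_nhds_spectralRadius a) ?_
  filter_upwards [eventually_ne_atTop 0] with n hn
  calc (c : ℝ≥0∞) = ((c ^ n : ℝ≥0) : ℝ≥0∞) ^ (1 / n : ℝ) := by
        rw [ENNReal.coe_pow, ← ENNReal.rpow_natCast, ← ENNReal.rpow_mul,
          mul_one_div_cancel (by exact_mod_cast hn), ENNReal.rpow_one]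
    _ ≤ (‖a ^ n‖₊ : ℝ≥0∞) ^ (1 / n : ℝ) := by gcongr; exact h n

theorem Pi.nnnorm_le_nnnorm_of_nonneg_of_le {ι : Type*} [Fintype ι] {x y : ι → ℝ}
    (hx : 0 ≤ x) (h : x ≤ y) : ‖x‖₊ ≤ ‖y‖₊ := by
  refine pi_nnnorm_le_iff.2 fun i => le_trans ?_ (nnnorm_le_pi_nnnorm y i)
  rw [← NNReal.coe_le_coe, coe_nnnorm, coe_nnnorm, Real.norm_of_nonneg (hx i),
    Real.norm_of_nonneg ((hx i).trans (h i))]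
  exact h i

namespace Matrix

variable {ι : Type*} [Fintype ι]

local notation "ρ(" M ")" => spectralRadius ℂ (Matrix.map M Complex.ofReal)

-- `spectralRadius` involves no norm; the `ℓ∞` operator norm only serves Gelfand's formula.
attribute [local instance] Matrix.linftyOpNormedAddCommGroup Matrix.linftyOpNormedRing
  Matrix.linftyOpNormedAlgebra

theorem linfty_opNNNorm_map_ofReal (M : Matrix ι ι ℝ) : ‖M.map Complex.ofReal‖₊ = ‖M‖₊ := by
  simp [linfty_opNNNorm_def]

theorem mulVec_mono_of_nonneg {M : Matrix ι ι ℝ} (hM : ∀ i j, 0 ≤ M i j) {x y : ι → ℝ}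
    (h : x ≤ y) : M *ᵥ x ≤ M *ᵥ y :=
  fun i => Finset.sum_le_sum fun j _ => mul_le_mul_of_nonneg_left (h j) (hM i j)

theorem mulVec_nonneg_of_nonneg {M : Matrix ι ι ℝ} (hM : ∀ i j, 0 ≤ M i j) {x : ι → ℝ}
    (hx : 0 ≤ x) : 0 ≤ M *ᵥ x := by
  simpa using mulVec_mono_of_nonneg hM hx

theorem mulVec_le_mulVec_of_le {A B : Matrix ι ι ℝ} (hAB : ∀ i j, A i j ≤ B i j)
    {x : ι → ℝ} (hx : 0 ≤ x) : A *ᵥ x ≤ B *ᵥ x :=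
  fun i => Finset.sum_le_sum fun j _ => mul_le_mul_of_nonneg_right (hAB i j) (hx j)

theorem mul_nonneg_of_nonneg {A B : Matrix ι ι ℝ} (hA : ∀ i j, 0 ≤ A i j)
    (hB : ∀ i j, 0 ≤ B i j) (i j : ι) : 0 ≤ (A * B) i j :=
  Finset.sum_nonneg fun k _ => mul_nonneg (hA i k) (hB k j)

theorem eventually_le_mulVec_of_tendsto {α : Type*} {l : Filter α} {K : α → Matrix ι ι ℝ}
    {K₀ : Matrix ι ι ℝ} (hK : Tendsto K l (𝓝 K₀)) (hKnn : ∀ᶠ a in l, ∀ i j, 0 ≤ K a i j)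
    {w : ι → ℝ} (hw : 0 ≤ w) {κ : ℝ} (hκ : 1 < κ) (h : κ • w ≤ K₀ *ᵥ w) :
    ∀ᶠ a in l, w ≤ K a *ᵥ w := by
  have hKw : Tendsto (fun a => K a *ᵥ w) l (𝓝 (K₀ *ᵥ w)) :=
    ((continuous_id.matrix_mulVec continuous_const).tendsto K₀).comp hK
  refine eventually_all.2 fun i => ?_
  rcases (hw i).eq_or_lt with h0 | hpos
  · filter_upwards [hKnn] with a ha
    rw [← h0]
    exact mulVec_nonneg_of_nonneg ha hw i
  · have hlt : w i < (K₀ *ᵥ w) i := (lt_mul_of_one_lt_left hpos hκ).trans_le (h i)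
    filter_upwards [(tendsto_pi_nhds.1 hKw i).eventually (eventually_gt_nhds hlt)] with a ha
    exact ha.le

variable [DecidableEq ι]

theorem pow_smul_le_pow_mulVec {M : Matrix ι ι ℝ} (hM : ∀ i j, 0 ≤ M i j) {w : ι → ℝ}
    {μ : ℝ} (hμ : 0 ≤ μ) (h : μ • w ≤ M *ᵥ w) (n : ℕ) : μ ^ n • w ≤ M ^ n *ᵥ w := by
  induction n with
  | zero => simp
  | succ n ih =>
    calc μ ^ (n + 1) • w = μ ^ n • μ • w := by rw [pow_succ, mul_smul]
      _ ≤ μ ^ n • (M *ᵥ w) := smul_le_smul_of_nonneg_left h (pow_nonneg hμ n)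
      _ = M *ᵥ (μ ^ n • w) := by rw [mulVec_smul]
      _ ≤ M *ᵥ (M ^ n *ᵥ w) := mulVec_mono_of_nonneg hM ih
      _ = M ^ (n + 1) *ᵥ w := by rw [mulVec_mulVec, pow_succ']

theorem ofReal_le_spectralRadius_of_smul_le_mulVec {M : Matrix ι ι ℝ}
    (hM : ∀ i j, 0 ≤ M i j) {w : ι → ℝ} (hw : 0 ≤ w) (hw0 : w ≠ 0) {μ : ℝ}
    (h : μ • w ≤ M *ᵥ w) : ENNReal.ofReal μ ≤ ρ(M) := by
  rcases le_or_gt μ 0 with hμ | hμ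
  · simp [ENNReal.ofReal_of_nonpos hμ]
  lift μ to ℝ≥0 using hμ.le
  rw [ENNReal.ofReal_coe_nnreal]
  refine spectrum.coe_le_spectralRadius_of_pow_le_nnnorm_pow fun n => ?_
  have hpow := pow_smul_le_pow_mulVec hM μ.2 h n
  have hmap : M.map Complex.ofReal ^ n = (M ^ n).map Complex.ofReal :=
    (map_pow Complex.ofRealHom.mapMatrix M n).symm
  rw [hmap, linfty_opNNNorm_map_ofReal]
  refine le_of_mul_le_mul_right ?_ (nnnorm_pos.2 hw0)
  calc μ ^ n * ‖w‖₊ = ‖(μ : ℝ) ^ n • w‖₊ := by simp [nnnorm_smul]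
    _ ≤ ‖M ^ n *ᵥ w‖₊ :=
      Pi.nnnorm_le_nnnorm_of_nonneg_of_le (smul_nonneg (pow_nonneg μ.2 n) hw) hpow
    _ ≤ ‖M ^ n‖₊ * ‖w‖₊ := linfty_opNNNorm_mulVec _ _

theorem exists_ofReal_eq_spectralRadius_smul_le_mulVec {M : Matrix ι ι ℝ}
    (hM : ∀ i j, 0 ≤ M i j) (hρ : ρ(M) ≠ 0) :
    ∃ (μ : ℝ) (w : ι → ℝ), ENNReal.ofReal μ = ρ(M) ∧ 0 ≤ w ∧ w ≠ 0 ∧ μ • w ≤ M *ᵥ w := by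
  have hσ : (spectrum ℂ (M.map Complex.ofReal)).Nonempty := by
    contrapose! hρ
    simp [spectralRadius, hρ]
  obtain ⟨z, hz, hzρ⟩ := spectrum.exists_nnnorm_eq_spectralRadius_of_nonempty hσ
  rw [← spectrum_toLin', ← Module.End.hasEigenvalue_iff_mem_spectrum] at hz
  obtain ⟨v, hv⟩ := hz.exists_hasEigenvector
  refine ⟨‖z‖, fun i => ‖v i‖, by simp [← hzρ, enorm_eq_nnnorm], fun i => norm_nonneg _, ?_,
    fun i => ?_⟩
  · intro h0
    exact hv.2 (funext fun i => norm_eq_zero.1 (congrFun h0 i))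
  · have hMv : M.map Complex.ofReal *ᵥ v = z • v := hv.apply_eq_smul
    calc ‖z‖ * ‖v i‖ = ‖(M.map Complex.ofReal *ᵥ v) i‖ := by simp [hMv]
      _ ≤ ∑ j, M i j * ‖v j‖ := by
        refine (norm_sum_le _ _).trans_eq (Finset.sum_congr rfl fun j _ => ?_)
        simp [abs_of_nonneg (hM i j)]

theorem spectralRadius_mono {A B : Matrix ι ι ℝ} (hA : ∀ i j, 0 ≤ A i j)
    (hAB : ∀ i j, A i j ≤ B i j) : ρ(A) ≤ ρ(B) := by
  rcases eq_or_ne ρ(A) 0 with h | h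
  · simp [h]
  obtain ⟨μ, w, hμ, hw, hw0, hAw⟩ := exists_ofReal_eq_spectralRadius_smul_le_mulVec hA h
  rw [← hμ]
  exact ofReal_le_spectralRadius_of_smul_le_mulVec (fun i j => (hA i j).trans (hAB i j)) hw hw0
    (hAw.trans (mulVec_le_mulVec_of_le hAB hw))

theorem spectralRadius_smul_lt_one {T : Matrix ι ι ℝ} (hT : ∀ i j, 0 ≤ T i j)
    (hTρ : ρ(T) < 1) {s : ℝ} (hs0 : 0 ≤ s) (hs1 : s ≤ 1) : ρ(s • T) < 1 :=
  (spectralRadius_mono (fun i j => mul_nonneg hs0 (hT i j))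
    fun i j => mul_le_of_le_one_left (hT i j) hs1).trans_lt hTρ

theorem nonneg_of_mulVec_le {T : Matrix ι ι ℝ} (hT : ∀ i j, 0 ≤ T i j) (hTρ : ρ(T) < 1)
    {x : ι → ℝ} (hx : T *ᵥ x ≤ x) : 0 ≤ x := by
  have hneg : x⁻ ≤ T *ᵥ x⁻ := by
    rw [negPart_def]
    refine sup_le ?_ (mulVec_nonneg_of_nonneg hT (negPart_nonneg x))
    calc -x ≤ -(T *ᵥ x) := neg_le_neg hx
      _ = T *ᵥ -x := (mulVec_neg _ _).symm
      _ ≤ T *ᵥ (-x ⊔ 0) := mulVec_mono_of_nonneg hT le_sup_left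
  by_contra hx0
  have hρ := ofReal_le_spectralRadius_of_smul_le_mulVec hT (negPart_nonneg x)
    (fun h => hx0 (negPart_eq_zero.1 h)) (by rwa [one_smul])
  rw [ENNReal.ofReal_one] at hρ
  exact hρ.not_gt hTρ

theorem isUnit_one_sub_of_spectralRadius_lt_one {T : Matrix ι ι ℝ} (hT : ∀ i j, 0 ≤ T i j)
    (hTρ : ρ(T) < 1) : IsUnit (1 - T) := by
  refine mulVec_injective_iff_isUnit.1 fun x y hxy => ?_
  have hfix : T *ᵥ (x - y) = x - y := by
    simp only [sub_mulVec, one_mulVec] at hxy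
    rw [mulVec_sub]
    linear_combination -hxy
  refine sub_eq_zero.1 (le_antisymm ?_ (nonneg_of_mulVec_le hT hTρ hfix.le))
  exact neg_nonneg.1 (nonneg_of_mulVec_le hT hTρ (by rw [mulVec_neg, hfix]))

theorem mulVec_inv_one_sub_mulVec {R : Type*} [CommRing R] {T : Matrix ι ι R}
    (h : IsUnit (1 - T)) (v : ι → R) : T *ᵥ ((1 - T)⁻¹ *ᵥ v) = (1 - T)⁻¹ *ᵥ v - v := by
  have hv : (1 - T) *ᵥ ((1 - T)⁻¹ *ᵥ v) = v := by
    rw [mulVec_mulVec, mul_nonsing_inv _ ((isUnit_iff_isUnit_det _).1 h), one_mulVec]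
  rw [sub_mulVec, one_mulVec] at hv
  linear_combination -hv

theorem inv_one_sub_mulVec_nonneg {T : Matrix ι ι ℝ} (hT : ∀ i j, 0 ≤ T i j)
    (hTρ : ρ(T) < 1) {v : ι → ℝ} (hv : 0 ≤ v) : 0 ≤ (1 - T)⁻¹ *ᵥ v := by
  refine nonneg_of_mulVec_le hT hTρ ?_
  rw [mulVec_inv_one_sub_mulVec (isUnit_one_sub_of_spectralRadius_lt_one hT hTρ)]
  exact sub_le_self _ hv

theorem inv_one_sub_nonneg {T : Matrix ι ι ℝ} (hT : ∀ i j, 0 ≤ T i j) (hTρ : ρ(T) < 1)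
    (i j : ι) : 0 ≤ (1 - T)⁻¹ i j := by
  simpa [mulVec_single_one] using
    inv_one_sub_mulVec_nonneg hT hTρ (Pi.single_nonneg.2 zero_le_one) i

theorem tendsto_smul_mul_inv_one_sub_smul {F T : Matrix ι ι ℝ} (h : IsUnit (1 - T)) :
    Tendsto (fun s : ℝ => s • F * (1 - s • T)⁻¹) (𝓝 1) (𝓝 (F * (1 - T)⁻¹)) := by
  have hdet : ContinuousAt Ring.inverse (1 - T).det := by
    rw [Ring.inverse_eq_inv']
    exact continuousAt_inv₀ ((isUnit_iff_isUnit_det _).1 h).ne_zero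
  have hinv : ContinuousAt (fun s : ℝ => (1 - s • T)⁻¹) 1 :=
    ContinuousAt.comp_of_eq (continuousAt_matrix_inv _ hdet) (by fun_prop) (by simp)
  have hK : ContinuousAt (fun s : ℝ => s • F * (1 - s • T)⁻¹) 1 :=
    (continuous_id.smul continuous_const).continuousAt.mul hinv
  simpa using hK.tendsto

variable {F T : Matrix ι ι ℝ}

theorem spectralRadius_add_le_spectralRadius_mul_inv_one_sub (hF : ∀ i j, 0 ≤ F i j)
    (hT : ∀ i j, 0 ≤ T i j) (hTρ : ρ(T) < 1) (h : 1 ≤ ρ(F + T)) :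
    ρ(F + T) ≤ ρ(F * (1 - T)⁻¹) := by
  have hFT : ∀ i j, 0 ≤ (F + T) i j := fun i j => add_nonneg (hF i j) (hT i j)
  obtain ⟨μ, w, hμ, hw, hw0, hFTw⟩ :=
    exists_ofReal_eq_spectralRadius_smul_le_mulVec hFT (one_pos.trans_le h).ne'
  have hμ1 : 1 ≤ μ := by rwa [← hμ, ENNReal.one_le_ofReal] at h
  have hQFw : μ • w ≤ (1 - T)⁻¹ *ᵥ (F *ᵥ w) := by
    -- `(1 - T) *ᵥ ((1 - T)⁻¹ *ᵥ (F *ᵥ w) - μ • w) = F *ᵥ w + μ • T *ᵥ w - μ • w ≥ 0`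
    refine sub_nonneg.1 (nonneg_of_mulVec_le hT hTρ ?_)
    have hTw : T *ᵥ w ≤ μ • T *ᵥ w :=
      le_smul_of_one_le_left (mulVec_nonneg_of_nonneg hT hw) hμ1
    rw [add_mulVec] at hFTw
    rw [mulVec_sub, mulVec_smul,
      mulVec_inv_one_sub_mulVec (isUnit_one_sub_of_spectralRadius_lt_one hT hTρ)]
    intro i
    have h1 := hFTw i
    have h2 := hTw i
    simp only [Pi.add_apply, Pi.sub_apply, Pi.smul_apply, smul_eq_mul] at h1 h2 ⊢
    linarith
  have hFw0 : F *ᵥ w ≠ 0 := by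
    intro h0
    rw [h0, mulVec_zero] at hQFw
    exact hw0 (le_antisymm ((smul_nonpos_iff_nonpos_of_pos_left (by linarith)).1 hQFw) hw)
  rw [← hμ]
  refine ofReal_le_spectralRadius_of_smul_le_mulVec
    (mul_nonneg_of_nonneg hF (inv_one_sub_nonneg hT hTρ)) (mulVec_nonneg_of_nonneg hF hw) hFw0 ?_
  rw [← mulVec_smul, ← mulVec_mulVec]
  exact mulVec_mono_of_nonneg hF hQFw

theorem ofReal_inv_le_spectralRadius_add (hF : ∀ i j, 0 ≤ F i j) (hT : ∀ i j, 0 ≤ T i j)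
    (hTρ : ρ(T) < 1) {s : ℝ} (hs0 : 0 < s) (hs1 : s ≤ 1) {w : ι → ℝ} (hw : 0 ≤ w)
    (hw0 : w ≠ 0) (h : w ≤ (s • F * (1 - s • T)⁻¹) *ᵥ w) : ENNReal.ofReal s⁻¹ ≤ ρ(F + T) := by
  have hsT : ∀ i j, 0 ≤ (s • T) i j := fun i j => mul_nonneg hs0.le (hT i j)
  have hsTρ := spectralRadius_smul_lt_one hT hTρ hs0.le hs1
  set u := (1 - s • T)⁻¹ *ᵥ w
  have hTu : (s • T) *ᵥ u = u - w :=
    mulVec_inv_one_sub_mulVec (isUnit_one_sub_of_spectralRadius_lt_one hsT hsTρ) w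
  have hu : 0 ≤ u := inv_one_sub_mulVec_nonneg hsT hsTρ hw
  have hwu : w ≤ u := sub_nonneg.1 (hTu ▸ mulVec_nonneg_of_nonneg hsT hu)
  have hu0 : u ≠ 0 := fun hu0 => hw0 (le_antisymm (hu0 ▸ hwu) hw)
  have hsu : u ≤ s • ((F + T) *ᵥ u) := by
    rw [← smul_mulVec, smul_add, add_mulVec, hTu]
    rw [← mulVec_mulVec] at h
    calc u = w + (u - w) := (add_sub_cancel w u).symm
      _ ≤ (s • F) *ᵥ u + (u - w) := add_le_add_left h _
  refine ofReal_le_spectralRadius_of_smul_le_mulVec (fun i j => add_nonneg (hF i j) (hT i j))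
    hu hu0 ?_
  calc s⁻¹ • u ≤ s⁻¹ • s • ((F + T) *ᵥ u) := smul_le_smul_of_nonneg_left hsu (by positivity)
    _ = (F + T) *ᵥ u := inv_smul_smul₀ hs0.ne' _

theorem one_le_spectralRadius_add (hF : ∀ i j, 0 ≤ F i j) (hT : ∀ i j, 0 ≤ T i j)
    (hTρ : ρ(T) < 1) (h : 1 ≤ ρ(F * (1 - T)⁻¹)) : 1 ≤ ρ(F + T) := by
  obtain ⟨κ, w, hκ, hw, hw0, hKw⟩ := exists_ofReal_eq_spectralRadius_smul_le_mulVec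
    (mul_nonneg_of_nonneg hF (inv_one_sub_nonneg hT hTρ)) (one_pos.trans_le h).ne'
  have hκ1 : 1 ≤ κ := by rwa [← hκ, ENNReal.one_le_ofReal] at h
  simpa using ofReal_inv_le_spectralRadius_add hF hT hTρ one_pos le_rfl hw hw0
    (by simpa using (le_smul_of_one_le_left hw hκ1).trans hKw)

theorem one_lt_spectralRadius_add (hF : ∀ i j, 0 ≤ F i j) (hT : ∀ i j, 0 ≤ T i j)
    (hTρ : ρ(T) < 1) (h : 1 < ρ(F * (1 - T)⁻¹)) : 1 < ρ(F + T) := by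
  obtain ⟨κ, w, hκ, hw, hw0, hKw⟩ := exists_ofReal_eq_spectralRadius_smul_le_mulVec
    (mul_nonneg_of_nonneg hF (inv_one_sub_nonneg hT hTρ)) (one_pos.trans h).ne'
  have hκ1 : 1 < κ := by rwa [← hκ, ENNReal.one_lt_ofReal] at h
  have hKnn : ∀ᶠ s in 𝓝[<] (1 : ℝ), ∀ i j, 0 ≤ (s • F * (1 - s • T)⁻¹) i j := by
    filter_upwards [Ioo_mem_nhdsLT zero_lt_one] with s hs
    exact mul_nonneg_of_nonneg (fun i j => mul_nonneg hs.1.le (hF i j))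
      (inv_one_sub_nonneg (fun i j => mul_nonneg hs.1.le (hT i j))
        (spectralRadius_smul_lt_one hT hTρ hs.1.le hs.2.le))
  have hK : Tendsto (fun s : ℝ => s • F * (1 - s • T)⁻¹) (𝓝[<] 1) (𝓝 (F * (1 - T)⁻¹)) :=
    (tendsto_smul_mul_inv_one_sub_smul
      (isUnit_one_sub_of_spectralRadius_lt_one hT hTρ)).mono_left nhdsWithin_le_nhds
  obtain ⟨s, hsw, hs⟩ :=
    ((eventually_le_mulVec_of_tendsto hK hKnn hw hκ1 hKw).and (Ioo_mem_nhdsLT zero_lt_one)).exists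
  calc 1 < ENNReal.ofReal s⁻¹ := ENNReal.one_lt_ofReal.2 ((one_lt_inv₀ hs.1).2 hs.2)
    _ ≤ ρ(F + T) := ofReal_inv_le_spectralRadius_add hF hT hTρ hs.1 hs.2.le hw hw0 hsw

end Matrix

open Matrix in
/-- For entrywise nonnegative `F`, `T` with the spectral radius of `T` below `1`,
the basic reproduction number `ℛ₀` (spectral radius of the NGM with large domain
`F(I-T)⁻¹`) and the real-time growth rate `ρ` (spectral radius of `F + T`) satisfy
`sign(ℛ₀ - 1) = sign(ρ - 1)`. -/
theorem sign_R0_equals_sign_growth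
    (n : ℕ) (F T : Matrix (Fin n) (Fin n) ℝ)
    (hF : ∀ i j, 0 ≤ F i j) (hTpos : ∀ i j, 0 ≤ T i j)
    (hT : spectralRadius ℂ (T.map (Complex.ofReal : ℝ → ℂ)) < 1) :
    (1 < spectralRadius ℂ (((F + T)).map (Complex.ofReal : ℝ → ℂ)) ↔
      1 < spectralRadius ℂ ((F * (1 - T)⁻¹).map (Complex.ofReal : ℝ → ℂ))) ∧
    (spectralRadius ℂ (((F + T)).map (Complex.ofReal : ℝ → ℂ)) = 1 ↔
      spectralRadius ℂ ((F * (1 - T)⁻¹).map (Complex.ofReal : ℝ → ℂ)) = 1) ∧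
    (spectralRadius ℂ (((F + T)).map (Complex.ofReal : ℝ → ℂ)) < 1 ↔
      spectralRadius ℂ ((F * (1 - T)⁻¹).map (Complex.ofReal : ℝ → ℂ)) < 1) := by
  set ρ := spectralRadius ℂ ((F + T).map Complex.ofReal)
  set ℛ₀ := spectralRadius ℂ ((F * (1 - T)⁻¹).map Complex.ofReal)
  have hρℛ₀ : 1 ≤ ρ → ρ ≤ ℛ₀ := spectralRadius_add_le_spectralRadius_mul_inv_one_sub hF hTpos hT
  have hle : 1 ≤ ρ ↔ 1 ≤ ℛ₀ := ⟨fun h => h.trans (hρℛ₀ h), one_le_spectralRadius_add hF hTpos hT⟩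
  have hlt : 1 < ρ ↔ 1 < ℛ₀ :=
    ⟨fun h => h.trans_le (hρℛ₀ h.le), one_lt_spectralRadius_add hF hTpos hT⟩
  refine ⟨hlt, ?_, ?_⟩
  · rw [le_antisymm_iff, le_antisymm_iff, hle]
    exact and_congr_left fun _ => not_lt.symm.trans (hlt.not.trans not_lt)
  · simpa only [not_le] using hle.not
end

section
/- Let T be an n × n real matrix whose spectral bound is negative, i.e. every complex eigenvalue of T has strictly negative real part. Then T is invertible, the function a ↦ exp(aT) is integrable on [0,∞), and −T^{−1} = ∫_0^∞ exp(aT) da, where exp denotes the matrix exponential. -/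
/-!
Over `ℂ` every vector is a sum of generalized eigenvectors of `T`. On a generalized
eigenvector `w` for `μ`, with `(T - μ)ᵏ w = 0`, the exponential series terminates:
`exp (t T) w = e^{tμ} ∑_{m<k} tᵐ/m! (T - μ)ᵐ w = O(e^{βt})` for every `β > Re μ`.
Taking `β < 0` above the real parts of the finitely many eigenvalues gives
`‖exp (t T)‖ = O(e^{βt})`. Hence `t ↦ exp (t T)` is integrable on `[0, ∞)`, its
antiderivative `T⁻¹ exp (t T)` tends to `0`, and the fundamental theorem of calculus gives
`∫ = 0 - T⁻¹`.
-/

open MeasureTheory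
attribute [local instance] Matrix.normedAddCommGroup Matrix.normedSpace

open NormedSpace Asymptotics Filter Nat

theorem Module.End.mem_spectrum_of_mem_maxGenEigenspace {K V : Type*} [Field K]
    [AddCommGroup V] [Module K V] [FiniteDimensional K V] {f : Module.End K V} {μ : K} {w : V}
    (hw : w ∈ f.maxGenEigenspace μ) (hw0 : w ≠ 0) : μ ∈ spectrum K f := by
  rw [← Module.End.hasEigenvalue_iff_mem_spectrum]
  have : f.HasUnifEigenvalue μ ⊤ := fun h => hw0 <| by
    rwa [Module.End.maxGenEigenspace, h, Submodule.mem_bot] at hw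
  exact (Module.End.hasUnifEigenvalue_iff_hasUnifEigenvalue_one (by simp)).mp this

theorem exists_neg_forall_re_lt {s : Set ℂ} (hs : s.Finite) (h : ∀ μ ∈ s, μ.re < 0) :
    ∃ β < 0, ∀ μ ∈ s, μ.re < β := by
  have hlt : ∀ᶠ β in nhdsWithin (0 : ℝ) (Set.Iio 0), ∀ μ ∈ s, μ.re < β :=
    (eventually_all_finite hs).mpr fun μ hμ =>
      nhdsWithin_le_nhds (eventually_gt_nhds (h μ hμ))
  exact (eventually_mem_nhdsWithin.and hlt).exists

theorem integrableOn_Ici_of_isBigO_exp {E : Type*} [NormedAddCommGroup E] {f : ℝ → E}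
    {a β : ℝ} (hβ : β < 0) (hf : ContinuousOn f (Set.Ici a))
    (ho : f =O[atTop] fun t => Real.exp (β * t)) : IntegrableOn f (Set.Ici a) := by
  refine (hf.locallyIntegrableOn measurableSet_Ici).integrableOn_of_isBigO_atTop ho
    ⟨Set.Ioi 0, Ioi_mem_atTop 0, ?_⟩
  simpa using exp_neg_integrableOn_Ioi 0 (neg_pos.mpr hβ)

open Matrix

variable {ι : Type*} [Fintype ι] [DecidableEq ι]

/- The sup norm on matrices is not submultiplicative, so the normed-algebra lemmas about `exp`
are applied under `Norms.Operator`; `exp` itself depends only on the topology. -/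
theorem Matrix.exp_smul_one {𝕜 : Type*} [RCLike 𝕜] (c : 𝕜) :
    exp (c • (1 : Matrix ι ι 𝕜)) = exp c • 1 := by
  rw [← Algebra.algebraMap_eq_smul_one, ← Algebra.algebraMap_eq_smul_one]
  open scoped Norms.Operator in exact (algebraMap_exp_comm c).symm

theorem Matrix.exp_mulVec_eq_sum_of_pow_mulVec_eq_zero {𝕜 : Type*} [RCLike 𝕜]
    {N : Matrix ι ι 𝕜} {w : ι → 𝕜} {k : ℕ} (hk : N ^ k *ᵥ w = 0) :
    exp N *ᵥ w = ∑ m ∈ Finset.range k, (m !⁻¹ : 𝕜) • (N ^ m *ᵥ w) := by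
  have hsum : HasSum (fun m => ((m !⁻¹ : 𝕜) • N ^ m) *ᵥ w) (exp N *ᵥ w) := by
    open scoped Norms.Operator in
    exact (exp_series_hasSum_exp' (𝕂 := 𝕜) N).map (mulVec.addMonoidHomLeft w)
      (continuous_id.matrix_mulVec continuous_const)
  refine hsum.unique (hasSum_sum_of_ne_finset_zero fun m hm => ?_) |>.trans
    (Finset.sum_congr rfl fun m _ => smul_mulVec _ _ _)
  obtain ⟨j, rfl⟩ := Nat.exists_eq_add_of_le (not_lt.mp (Finset.mem_range.not.mp hm))
  rw [add_comm, pow_add, smul_mulVec, ← mulVec_mulVec, hk, mulVec_zero, smul_zero]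

theorem Matrix.isBigO_exp_smul_mulVec_of_pow_mulVec_eq_zero {N : Matrix ι ι ℂ} {w : ι → ℂ}
    {k : ℕ} (hk : N ^ k *ᵥ w = 0) {δ : ℝ} (hδ : 0 < δ) :
    (fun t : ℝ => exp (t • N) *ᵥ w) =O[atTop] fun t => Real.exp (δ * t) := by
  have hsum (t : ℝ) : exp (t • N) *ᵥ w =
      ∑ m ∈ Finset.range k, t ^ m • ((m !⁻¹ : ℂ) • (N ^ m *ᵥ w)) := by
    rw [exp_mulVec_eq_sum_of_pow_mulVec_eq_zero (k := k)]
    · simp only [smul_pow, smul_mulVec, smul_comm (t ^ _)]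
    · rw [smul_pow, smul_mulVec, hk, smul_zero]
  simp_rw [hsum]
  refine IsBigO.fun_sum fun m _ => ?_
  simpa using (isLittleO_pow_exp_pos_mul_atTop m hδ).isBigO.smul
    (isBigO_const_const ((m !⁻¹ : ℂ) • (N ^ m *ᵥ w)) (one_ne_zero (α := ℝ)) atTop)

theorem Matrix.isBigO_exp_smul_mulVec_of_mem_maxGenEigenspace {A : Matrix ι ι ℂ} {μ : ℂ}
    {w : ι → ℂ} (hw : w ∈ Module.End.maxGenEigenspace (toLin' A) μ) {β : ℝ}
    (hβ : μ.re < β) :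
    (fun t : ℝ => exp (t • A) *ᵥ w) =O[atTop] fun t => Real.exp (β * t) := by
  obtain ⟨k, hk⟩ := (Module.End.mem_maxGenEigenspace _ _ _).mp hw
  replace hk : (A - μ • 1) ^ k *ᵥ w = 0 := by
    rwa [← toLin'_apply, toLin'_pow, map_sub, map_smul, toLin'_one]
  have hsplit (t : ℝ) :
      exp (t • A) *ᵥ w = Complex.exp (t * μ) • (exp (t • (A - μ • 1)) *ᵥ w) := by
    have hcomm : Commute (((t : ℂ) * μ) • (1 : Matrix ι ι ℂ)) (t • (A - μ • 1)) :=
      (Commute.one_left _).smul_left _ |>.smul_right _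
    have hA : t • A = ((t : ℂ) * μ) • (1 : Matrix ι ι ℂ) + t • (A - μ • 1) := by
      rw [smul_sub, ← smul_assoc, Complex.real_smul, add_sub_cancel]
    rw [hA, exp_add_of_commute _ _ hcomm, exp_smul_one, smul_one_mul, smul_mulVec,
      Complex.exp_eq_exp_ℂ]
  have hscalar : (fun t : ℝ => Complex.exp (t * μ)) =O[atTop] fun t => Real.exp (μ.re * t) :=
    isBigO_of_le _ fun t => by simp [Complex.norm_exp, mul_comm]
  simp_rw [hsplit]
  have hnil := isBigO_exp_smul_mulVec_of_pow_mulVec_eq_zero hk (sub_pos.mpr hβ)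
  refine (hscalar.smul hnil).congr_right fun t => ?_
  rw [smul_eq_mul, ← Real.exp_add, ← add_mul, add_sub_cancel]

theorem Matrix.isBigO_exp_smul_mulVec {A : Matrix ι ι ℂ} {β : ℝ}
    (hβ : ∀ μ ∈ spectrum ℂ A, μ.re < β) (v : ι → ℂ) :
    (fun t : ℝ => exp (t • A) *ᵥ v) =O[atTop] fun t => Real.exp (β * t) := by
  have hv : v ∈ ⨆ μ, Module.End.maxGenEigenspace (toLin' A) μ := by
    rw [Module.End.iSup_maxGenEigenspace_eq_top]; trivial
  refine Submodule.iSup_induction (motive := fun v =>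
      (fun t : ℝ => exp (t • A) *ᵥ v) =O[atTop] fun t => Real.exp (β * t)) _ hv
    (fun μ w hw => ?_) (by simpa only [mulVec_zero] using isBigO_zero _ _)
    fun x y hx hy => by simpa only [mulVec_add] using hx.add hy
  rcases eq_or_ne w 0 with rfl | hw0
  · simpa only [mulVec_zero] using isBigO_zero _ _
  · refine isBigO_exp_smul_mulVec_of_mem_maxGenEigenspace hw (hβ μ ?_)
    simpa using Module.End.mem_spectrum_of_mem_maxGenEigenspace hw hw0

theorem Matrix.isBigO_exp_smul {A : Matrix ι ι ℂ} {β : ℝ}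
    (hβ : ∀ μ ∈ spectrum ℂ A, μ.re < β) :
    (fun t : ℝ => exp (t • A)) =O[atTop] fun t => Real.exp (β * t) := by
  refine isBigO_pi.mpr fun i => isBigO_pi.mpr fun j => ?_
  simpa using isBigO_pi.mp (isBigO_exp_smul_mulVec hβ (Pi.single j 1)) i

theorem Matrix.map_exp_smul_ofReal (T : Matrix ι ι ℝ) (t : ℝ) :
    (exp (t • T)).map ((↑) : ℝ → ℂ) = exp (t • T.map ((↑) : ℝ → ℂ)) := by
  have hcont : Continuous (Complex.ofRealHom.mapMatrix : Matrix ι ι ℝ →+* Matrix ι ι ℂ) :=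
    continuous_id.matrix_map Complex.continuous_ofReal
  calc (exp (t • T)).map ((↑) : ℝ → ℂ)
      = Complex.ofRealHom.mapMatrix (exp (t • T)) := rfl
    _ = exp (Complex.ofRealHom.mapMatrix (t • T)) := by
      open scoped Norms.Operator in exact map_exp _ hcont (t • T)
    _ = exp (t • T.map ((↑) : ℝ → ℂ)) := by
      congr 1
      ext
      simp

theorem Matrix.isBigO_exp_smul_of_map_ofReal {T : Matrix ι ι ℝ} {β : ℝ}
    (hβ : ∀ μ ∈ spectrum ℂ (T.map ((↑) : ℝ → ℂ)), μ.re < β) :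
    (fun t : ℝ => exp (t • T)) =O[atTop] fun t => Real.exp (β * t) := by
  rw [← isBigO_norm_left]
  simp_rw [← norm_map_eq _ _ Complex.norm_real, map_exp_smul_ofReal]
  exact (isBigO_exp_smul hβ).norm_left

theorem Matrix.isUnit_map_iff {K L : Type*} [Field K] [Field L] (f : K →+* L)
    (A : Matrix ι ι K) :
    IsUnit (A.map f) ↔ IsUnit A := by
  rw [isUnit_iff_isUnit_det, isUnit_iff_isUnit_det, isUnit_iff_ne_zero, isUnit_iff_ne_zero,
    ← RingHom.mapMatrix_apply, ← RingHom.map_det, map_ne_zero]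

theorem Matrix.hasDerivAt_inv_mul_exp_smul {𝕜 : Type*} [RCLike 𝕜] {T : Matrix ι ι 𝕜}
    (hT : IsUnit T) (t : 𝕜) :
    HasDerivAt (fun u : 𝕜 => T⁻¹ * exp (u • T)) (exp (t • T)) t := by
  open scoped Norms.Operator in
  have := (hasDerivAt_exp_smul_const' T t).const_mul T⁻¹
  rwa [← mul_assoc, nonsing_inv_mul _ ((isUnit_iff_isUnit_det T).mp hT), one_mul] at this

theorem stmt19 (n : ℕ) (T : Matrix (Fin n) (Fin n) ℝ)
    (hT : ∀ μ ∈ spectrum ℂ (T.map (Complex.ofReal : ℝ → ℂ)), μ.re < 0) :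
    IsUnit T ∧
    @IntegrableOn _ _ _ _ SeminormedAddGroup.toContinuousENorm (fun a : ℝ => NormedSpace.exp (a • T)) (Set.Ici 0) volume ∧
    -T⁻¹ = ∫ a in Set.Ici (0 : ℝ), NormedSpace.exp (a • T) := by
  have hunit : IsUnit T := by
    refine (isUnit_map_iff Complex.ofRealHom T).mp (not_not.mp fun h => ?_)
    exact (hT 0 ((spectrum.zero_mem_iff ℂ).mpr h)).false
  obtain ⟨β, hβ0, hβ⟩ := exists_neg_forall_re_lt (finite_spectrum _) hT
  have hdecay := isBigO_exp_smul_of_map_ofReal hβ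
  have hcont : Continuous fun t : ℝ => exp (t • T) := by
    open scoped Norms.Operator in fun_prop
  have hint := integrableOn_Ici_of_isBigO_exp (a := 0) hβ0 hcont.continuousOn hdecay
  have hlim : Tendsto (fun t : ℝ => T⁻¹ * exp (t • T)) atTop (nhds 0) := by
    have h0 := hdecay.trans_tendsto
      (Real.tendsto_exp_atBot.comp (tendsto_id.const_mul_atTop_of_neg hβ0))
    have := (continuous_const (y := T⁻¹)).matrix_mul continuous_id |>.tendsto 0 |>.comp h0
    simpa only [id, Function.comp_def, Matrix.mul_zero] using this
  refine ⟨hunit, hint, ?_⟩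
  rw [integral_Ici_eq_integral_Ioi, integral_Ioi_of_hasDerivAt_of_tendsto'
    (fun t _ => hasDerivAt_inv_mul_exp_smul hunit t) (hint.mono_set Set.Ioi_subset_Ici_self) hlim]
  simp
end
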